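/- arXiv:1503.05937 — 6 statements merged into one kernel-verified Lean document; each statement's English description precedes it below -/
import Mathlib

section
/- Let ω, Ω > 0 and suppose Ω is not an integer multiple of ω/2. Define E(j,s) = ω(j + 1/2) + sΩ/2 for j ∈ ℕ, s ∈ {-1,1}. Then E(i,si) - E(j,sj) = E(k,sk) - E(l,sl) holds if and only if i - j = k - l (as integers) and si - sj = sk - sl. -/
/-- For ω, Ω > 0 with Ω not an integer multiple of ω/2, the equality of
eigenvalue gaps `E(i,si) - E(j,sj) = E(k,sk) - E(l,sl)` holds iff `i - j = k - l` (in ℤ)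
and `si - sj = sk - sl`. -/
theorem rabi_gap_equality_iff
    (ω Ω : ℝ) (hω : 0 < ω) (hΩ : 0 < Ω)
    (hmult : ¬ ∃ n : ℤ, Ω = n * (ω / 2))
    (E : ℕ → ℝ → ℝ)
    (hE : ∀ (j : ℕ) (s : ℝ), E j s = ω * (j + 1/2) + s * Ω / 2)
    (i j k l : ℕ) (si sj sk sl : ℝ)
    (hsi : si = 1 ∨ si = -1) (hsj : sj = 1 ∨ sj = -1)
    (hsk : sk = 1 ∨ sk = -1) (hsl : sl = 1 ∨ sl = -1) :
    E i si - E j sj = E k sk - E l sl ↔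
      ((i : ℤ) - j = (k : ℤ) - l ∧ si - sj = sk - sl) := by
  have hω0 : ω ≠ 0 := ne_of_gt hω
  rw [hE, hE, hE, hE]
  constructor
  · intro h
    have heq : ω * ((i:ℝ) - j - k + l) = ((sk - sl) - (si - sj)) * (Ω / 2) := by
      linear_combination h
    have hcase : ((sk - sl) - (si - sj) = 0 ∧ si - sj = sk - sl) ∨
        ∃ e : ℤ, (e:ℝ) * ((sk - sl) - (si - sj)) = 4 := by
      rcases hsi with rfl | rfl <;> rcases hsj with rfl | rfl <;>
        rcases hsk with rfl | rfl <;> rcases hsl with rfl | rfl <;>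
        first
          | (right; refine ⟨1, ?_⟩; norm_num; done)
          | (right; refine ⟨-1, ?_⟩; norm_num; done)
          | (right; refine ⟨2, ?_⟩; norm_num; done)
          | (right; refine ⟨-2, ?_⟩; norm_num; done)
          | (left; constructor <;> norm_num; done)
    rcases hcase with ⟨hd, hs⟩ | ⟨e, he⟩
    · rw [hd] at heq
      have hm : (i:ℝ) - j - k + l = 0 := by
        rcases mul_eq_zero.mp (by linarith : ω * ((i:ℝ) - j - k + l) = 0) with h' | h'
        · exact absurd h' hω0
        · exact h'
      have hz : (((i:ℤ) - j - k + l : ℤ) : ℝ) = 0 := by push_cast; linarith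
      have hz' : (i:ℤ) - j - k + l = 0 := by exact_mod_cast hz
      exact ⟨by omega, hs⟩
    · exfalso
      apply hmult
      refine ⟨e * ((i:ℤ) - j - k + l), ?_⟩
      push_cast
      linear_combination (-(e:ℝ)/2) * heq + (-(Ω/4)) * he
  · rintro ⟨h1, h2⟩
    have hr : (i:ℝ) - j = (k:ℝ) - l := by exact_mod_cast h1
    linear_combination ω * hr + (Ω/2) * h2
end

section
/- Let ω > 0 and Ω = (2m+1)ω/2 for some nonnegative integer m. Define E(j,s) = ω(j + 1/2) + sΩ/2. If E(i,si) - E(j,sj) = E(k,sk) - E(l,sl) and i + l - j - k ≠ 0, then sj = sk = -si = -sl. -/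
/-- For ω > 0 and Ω = (2m+1)ω/2, if `E(i,si) - E(j,sj) = E(k,sk) - E(l,sl)`
and `i + l - j - k ≠ 0`, then `sj = sk = -si = -sl`. -/
theorem rabi_gap_half_integer_case
    (ω Ω : ℝ) (hω : 0 < ω) (m : ℕ) (hΩ : Ω = (2 * (m : ℝ) + 1) * ω / 2)
    (E : ℕ → ℝ → ℝ)
    (hE : ∀ (j : ℕ) (s : ℝ), E j s = ω * (j + 1/2) + s * Ω / 2)
    (i j k l : ℕ) (si sj sk sl : ℝ)
    (hsi : si = 1 ∨ si = -1) (hsj : sj = 1 ∨ sj = -1)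
    (hsk : sk = 1 ∨ sk = -1) (hsl : sl = 1 ∨ sl = -1)
    (h : E i si - E j sj = E k sk - E l sl)
    (hn : (i : ℤ) + l - j - k ≠ 0) :
    sj = sk ∧ sj = -si ∧ sj = -sl := by
  simp only [hE, hΩ] at h
  set n : ℤ := (i : ℤ) + l - j - k with hn'
  have hcast : ((n : ℝ)) = (i : ℝ) + l - j - k := by rw [hn']; push_cast; ring
  have key : (4 * (n : ℝ)) * ω = ((sj + sk - si - sl) * (2 * (m : ℝ) + 1)) * ω := by
    linear_combination (4 * ω) * hcast + 4 * h
  have key2 : 4 * (n : ℝ) = (sj + sk - si - sl) * (2 * (m : ℝ) + 1) :=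
    mul_right_cancel₀ hω.ne' key
  rcases hsi with rfl | rfl <;> rcases hsj with rfl | rfl <;>
    rcases hsk with rfl | rfl <;> rcases hsl with rfl | rfl <;>
    norm_num at key2 ⊢ <;>
    first
      | exact hn key2
      | (have kz : (4 : ℤ) * n = 2 * (2 * m + 1) := by exact_mod_cast key2
         omega)
      | (have kz : (4 : ℤ) * n = -(2 * (2 * m + 1)) := by exact_mod_cast key2
         omega)
end

section
/- Let ω, Ω be positive reals with ω ≠ Ω. Define E2(j,s) = (ω + sΩ(2j+1)) / (2(Ω² - ω²)) for j ∈ ℕ, s ∈ {-1,1}. Suppose i - j = k - l (as integers), si - sj = sk - sl, (i,si) ≠ (j,sj), ((i,si),(j,sj)) ≠ ((k,sk),(l,sl)), and E2(i,si) - E2(j,sj) = E2(k,sk) - E2(l,sl). Then si = sj = sk = sl and i - j = k - l, unless (i,si) = (k,sk) and (j,sj) = (l,sl). -/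
/-- Equality of second-order Rayleigh–Schrödinger gap corrections forces
either all signs equal, or the index pairs to coincide. -/
theorem rabi_second_order_gap_equality
    (ω Ω : ℝ) (hω : 0 < ω) (hΩ : 0 < Ω) (hne : ω ≠ Ω)
    (E2 : ℕ → ℝ → ℝ)
    (hE2 : ∀ (j : ℕ) (s : ℝ), E2 j s = (ω + s * Ω * (2 * j + 1)) / (2 * (Ω ^ 2 - ω ^ 2)))
    (i j k l : ℕ) (si sj sk sl : ℝ)
    (hsi : si = 1 ∨ si = -1) (hsj : sj = 1 ∨ sj = -1)
    (hsk : sk = 1 ∨ sk = -1) (hsl : sl = 1 ∨ sl = -1)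
    (hn : (i : ℤ) - j = (k : ℤ) - l)
    (hs : si - sj = sk - sl)
    (hij : (i, si) ≠ (j, sj))
    (hpairs : ((i, si), (j, sj)) ≠ ((k, sk), (l, sl)))
    (h : E2 i si - E2 j sj = E2 k sk - E2 l sl) :
    (si = sj ∧ sj = sk ∧ sk = sl ∧ (i : ℤ) - j = (k : ℤ) - l) ∨
      ((i, si) = (k, sk) ∧ (j, sj) = (l, sl)) := by
  have hD : (2:ℝ) * (Ω ^ 2 - ω ^ 2) ≠ 0 := by
    intro h0
    apply hne
    nlinarith [sq_nonneg (ω - Ω), sq_nonneg (ω + Ω)]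
  rw [hE2 i si, hE2 j sj, hE2 k sk, hE2 l sl, div_sub_div_same, div_sub_div_same,
    div_eq_div_iff hD hD] at h
  have h' := mul_right_cancel₀ hD h
  have hnr : (i : ℝ) - j = (k : ℝ) - l := by exact_mod_cast hn
  have key : si * (2 * (i:ℝ) + 1) - sj * (2 * (j:ℝ) + 1)
      = sk * (2 * (k:ℝ) + 1) - sl * (2 * (l:ℝ) + 1) := by
    apply mul_left_cancel₀ (show Ω ≠ 0 from hΩ.ne')
    ring_nf
    ring_nf at h'
    linarith
  rcases hsi with rfl | rfl <;> rcases hsj with rfl | rfl <;>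
    rcases hsk with rfl | rfl <;> rcases hsl with rfl | rfl
  · exact Or.inl ⟨rfl, rfl, rfl, hn⟩
  · exact absurd hs (by norm_num)
  · exact absurd hs (by norm_num)
  · -- (1,1,-1,-1)
    have hij' : i = j := by
      have : (i : ℝ) = j := by linarith [key, hnr]
      exact_mod_cast this
    subst hij'
    exact absurd rfl hij
  · exact absurd hs (by norm_num)
  · -- (1,-1,1,-1)
    have hik : i = k := by
      have : (i : ℝ) = k := by linarith [key, hnr]
      exact_mod_cast this
    have hjl : j = l := by
      have : (j : ℝ) = l := by linarith [key, hnr]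
      exact_mod_cast this
    exact Or.inr ⟨by rw [hik], by rw [hjl]⟩
  · exact absurd hs (by norm_num)
  · exact absurd hs (by norm_num)
  · exact absurd hs (by norm_num)
  · exact absurd hs (by norm_num)
  · -- (-1,1,-1,1)
    have hik : i = k := by
      have : (i : ℝ) = k := by linarith [key, hnr]
      exact_mod_cast this
    have hjl : j = l := by
      have : (j : ℝ) = l := by linarith [key, hnr]
      exact_mod_cast this
    exact Or.inr ⟨by rw [hik], by rw [hjl]⟩
  · exact absurd hs (by norm_num)
  · -- (-1,-1,1,1)
    have hij' : i = j := by
      have : (i : ℝ) = j := by linarith [key, hnr]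
      exact_mod_cast this
    subst hij'
    exact absurd rfl hij
  · exact absurd hs (by norm_num)
  · exact absurd hs (by norm_num)
  · exact Or.inl ⟨rfl, rfl, rfl, hn⟩
end

section
/- Let ω > 0 and let E(j,s) = ω(j+1/2) + (s/2)ω (i.e., the resonant case Ω = ω). For j ∈ ℕ define d(j,1) = √((j+1)/2) and d(j+1,-1) = −√((j+1)/2), d(0,-1) = 0 (the first-order eigenvalue derivatives). If E(j1,s1) − E(j2,s2) = E(j3,s3) − E(j4,s4) and d(j1,s1) − d(j2,s2) = d(j3,s3) − d(j4,s4), then (j1,s1) = (j3,s3) and (j2,s2) = (j4,s4), provided (j1,s1) ≠ (j2,s2). -/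
/-- `d` is injective on valid indices: `d j s = d j' s'` forces `(j,s) = (j',s')`. -/
lemma rabi_d_inj (d : ℕ → ℝ → ℝ)
    (hd1 : ∀ j : ℕ, d j 1 = Real.sqrt ((j + 1) / 2))
    (hdm1 : ∀ j : ℕ, d j (-1) = -Real.sqrt (j / 2))
    (j j' : ℕ) (s s' : ℝ) (hs : s = 1 ∨ s = -1) (hs' : s' = 1 ∨ s' = -1)
    (h : d j s = d j' s') : (j, s) = (j', s') := by
  rcases hs with rfl | rfl <;> rcases hs' with rfl | rfl
  · rw [hd1, hd1] at h
    have h2 : ((j : ℝ) + 1) / 2 = ((j' : ℝ) + 1) / 2 := by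
      have := congrArg (fun x : ℝ => x ^ 2) h
      simpa only [Real.sq_sqrt (by positivity : (0:ℝ) ≤ ((j : ℝ) + 1) / 2),
        Real.sq_sqrt (by positivity : (0:ℝ) ≤ ((j' : ℝ) + 1) / 2)] using this
    have : (j : ℝ) = (j' : ℝ) := by linarith
    exact congrArg (fun n => (n, (1:ℝ))) (by exact_mod_cast this)
  · rw [hd1, hdm1] at h
    have h1 : 0 < Real.sqrt (((j : ℝ) + 1) / 2) := Real.sqrt_pos.2 (by positivity)
    have h2 : -Real.sqrt ((j' : ℝ) / 2) ≤ 0 := neg_nonpos.2 (Real.sqrt_nonneg _)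
    linarith
  · rw [hdm1, hd1] at h
    have h1 : 0 < Real.sqrt (((j' : ℝ) + 1) / 2) := Real.sqrt_pos.2 (by positivity)
    have h2 : -Real.sqrt ((j : ℝ) / 2) ≤ 0 := neg_nonpos.2 (Real.sqrt_nonneg _)
    linarith
  · rw [hdm1, hdm1] at h
    have h' : Real.sqrt ((j : ℝ) / 2) = Real.sqrt ((j' : ℝ) / 2) := by linarith
    have h2 : ((j : ℝ)) / 2 = ((j' : ℝ)) / 2 := by
      have := congrArg (fun x : ℝ => x ^ 2) h'
      simpa only [Real.sq_sqrt (by positivity : (0:ℝ) ≤ ((j : ℝ)) / 2),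
        Real.sq_sqrt (by positivity : (0:ℝ) ≤ ((j' : ℝ)) / 2)] using this
    have : (j : ℝ) = (j' : ℝ) := by linarith
    exact congrArg (fun n => (n, (-1:ℝ))) (by exact_mod_cast this)

/-- In the resonant case `Ω = ω`, equality of the zeroth-order eigenvalue
gaps and of the first-order derivative gaps forces the index pairs to coincide. Here
`E j s = ω(j+1/2) + sω/2`, `d j 1 = √((j+1)/2)` and `d j (−1) = −√(j/2)` (so `d 0 (−1) = 0`). -/
theorem rabi_resonant_nonresonance
    (ω : ℝ) (hω : 0 < ω)
    (E : ℕ → ℝ → ℝ)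
    (hE : ∀ (j : ℕ) (s : ℝ), E j s = ω * (j + 1/2) + s * ω / 2)
    (d : ℕ → ℝ → ℝ)
    (hd1 : ∀ j : ℕ, d j 1 = Real.sqrt ((j + 1) / 2))
    (hdm1 : ∀ j : ℕ, d j (-1) = -Real.sqrt (j / 2))
    (j1 j2 j3 j4 : ℕ) (s1 s2 s3 s4 : ℝ)
    (hs1 : s1 = 1 ∨ s1 = -1) (hs2 : s2 = 1 ∨ s2 = -1)
    (hs3 : s3 = 1 ∨ s3 = -1) (hs4 : s4 = 1 ∨ s4 = -1)
    (hE0 : E j1 s1 - E j2 s2 = E j3 s3 - E j4 s4)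
    (hd0 : d j1 s1 - d j2 s2 = d j3 s3 - d j4 s4)
    (hne : (j1, s1) ≠ (j2, s2)) :
    (j1, s1) = (j3, s3) ∧ (j2, s2) = (j4, s4) := by
  -- Key identity : `E j s = 2ω (d j s)^2`
  have key : ∀ (j : ℕ) (s : ℝ), s = 1 ∨ s = -1 → E j s = 2 * ω * (d j s) ^ 2 := by
    intro j s hs
    rcases hs with rfl | rfl
    · rw [hE, hd1, Real.sq_sqrt (by positivity : (0:ℝ) ≤ ((j : ℝ) + 1) / 2)]; ring
    · rw [hE, hdm1, neg_pow, Real.sq_sqrt (by positivity : (0:ℝ) ≤ ((j : ℝ)) / 2)]; ring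
  rw [key j1 s1 hs1, key j2 s2 hs2, key j3 s3 hs3, key j4 s4 hs4] at hE0
  have hsq : (d j1 s1) ^ 2 - (d j2 s2) ^ 2 = (d j3 s3) ^ 2 - (d j4 s4) ^ 2 := by
    have h2ω : (2 : ℝ) * ω ≠ 0 := by positivity
    have : 2 * ω * ((d j1 s1) ^ 2 - (d j2 s2) ^ 2 - ((d j3 s3) ^ 2 - (d j4 s4) ^ 2)) = 0 := by
      ring_nf; ring_nf at hE0; linarith
    rcases mul_eq_zero.1 this with h | h
    · exact absurd h h2ω
    · linarith
  -- d j1 s1 ≠ d j2 s2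
  have hD : d j1 s1 ≠ d j2 s2 := by
    intro h
    exact hne (rabi_d_inj d hd1 hdm1 j1 j2 s1 s2 hs1 hs2 h)
  have hDne : d j1 s1 - d j2 s2 ≠ 0 := sub_ne_zero.2 hD
  have hsum : d j1 s1 + d j2 s2 = d j3 s3 + d j4 s4 := by
    have hfac : (d j1 s1 - d j2 s2) * (d j1 s1 + d j2 s2)
        = (d j1 s1 - d j2 s2) * (d j3 s3 + d j4 s4) := by
      calc (d j1 s1 - d j2 s2) * (d j1 s1 + d j2 s2)
          = (d j1 s1) ^ 2 - (d j2 s2) ^ 2 := by ring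
        _ = (d j3 s3) ^ 2 - (d j4 s4) ^ 2 := hsq
        _ = (d j3 s3 - d j4 s4) * (d j3 s3 + d j4 s4) := by ring
        _ = (d j1 s1 - d j2 s2) * (d j3 s3 + d j4 s4) := by rw [hd0]
    exact mul_left_cancel₀ hDne hfac
  have h13 : d j1 s1 = d j3 s3 := by linarith
  have h24 : d j2 s2 = d j4 s4 := by linarith
  exact ⟨rabi_d_inj d hd1 hdm1 j1 j3 s1 s3 hs1 hs3 h13,
    rabi_d_inj d hd1 hdm1 j2 j4 s2 s4 hs2 hs4 h24⟩
end

section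
/- With E(j,s) = ω(j+1/2) + sΩ/2 and the matrix elements V as in the Rabi model, the second-order Rayleigh–Schrödinger coefficient E2(j,s) = −Σ_{(m,t)≠(j,s)} (E(m,t) − E(j,s))⁻¹ |V_{(j,s),(m,t)}|² equals (ω + sΩ(2j+1))/(2(Ω² − ω²)), for ω ≠ Ω with Ω not an integer multiple of ω. -/
/-!
Only two states couple to `(j, s)`: the spin-flipped neighbours `(j + 1, !s)` and `(j - 1, !s)`,
with squared couplings `(j + 1)/2` and `j/2` and energy gaps `ω - sΩ` and `-ω - sΩ`.
The series therefore has two terms, and the closed form is their sum brought to the common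
denominator `(ω - sΩ)(ω + sΩ) = ω² - Ω²`. At `j = 0` the second neighbour is junk
(`0 - 1 = 0` in `ℕ`), but its coupling vanishes.
-/

open Function

theorem tsum_ne_eq_add_of_eq_zero {α M : Type*} [AddCommMonoid M] [TopologicalSpace M]
    {f : α → M} {a b c : α} (hbc : b ≠ c) (hab : a ≠ b) (hac : a ≠ c)
    (hf : ∀ p, p ≠ b → p ≠ c → f p = 0) :
    ∑' p : {p // p ≠ a}, f p = f b + f c := by
  classical
  have hsupp : support f ⊆ {p | p ≠ a} := fun p hp hpa =>
    hp (hf p (hpa ▸ hab) (hpa ▸ hac))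
  refine (tsum_subtype_eq_of_support_subset hsupp).trans ?_
  rw [tsum_eq_sum (s := {b, c}), Finset.sum_pair hbc]
  intro p hp
  simp only [Finset.mem_insert, Finset.mem_singleton, not_or] at hp
  exact hf p hp.1 hp.2

theorem neg_inv_mul_add_inv_mul_eq (ω Ω σ x : ℝ) (hσ : σ ^ 2 = 1) (hωΩ : ω ^ 2 ≠ Ω ^ 2) :
    -((ω - σ * Ω)⁻¹ * ((x + 1) / 2) + (-ω - σ * Ω)⁻¹ * (x / 2)) =
      (ω + σ * Ω * (2 * x + 1)) / (2 * (Ω ^ 2 - ω ^ 2)) := by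
  have hprod : (ω - σ * Ω) * (ω + σ * Ω) = ω ^ 2 - Ω ^ 2 := by linear_combination -Ω ^ 2 * hσ
  have hne : (ω - σ * Ω) * (ω + σ * Ω) ≠ 0 := hprod ▸ sub_ne_zero.2 hωΩ
  have h₁ : ω - σ * Ω ≠ 0 := left_ne_zero_of_mul hne
  have h₂ : -ω - σ * Ω ≠ 0 := by
    rw [show -ω - σ * Ω = -(ω + σ * Ω) by ring]
    exact neg_ne_zero.2 (right_ne_zero_of_mul hne)
  have h₃ : Ω ^ 2 - ω ^ 2 ≠ 0 := sub_ne_zero.2 hωΩ.symm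
  field_simp
  linear_combination -(2 * x * σ * Ω ^ 3 + ω * Ω ^ 2 + σ * Ω ^ 3) * hσ

namespace Rabi

noncomputable section

def spin (s : Bool) : ℝ := bif s then 1 else -1

@[simp] theorem spin_not (s : Bool) : spin (!s) = -spin s := by cases s <;> simp [spin]

theorem spin_sq (s : Bool) : spin s ^ 2 = 1 := by cases s <;> norm_num [spin]

def energy (ω Ω : ℝ) (j : ℕ) (s : Bool) : ℝ := ω * (j + 1 / 2) + spin s * Ω / 2

def coupling (p q : ℕ × Bool) : ℝ :=
  ((if p.1 + 1 = q.1 then Real.sqrt ((q.1 : ℝ) / 2) else 0) +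
    (if p.1 = q.1 + 1 then Real.sqrt (((q.1 : ℝ) + 1) / 2) else 0)) *
    (if p.2 = q.2 then 0 else 1)

variable (ω Ω : ℝ) (j : ℕ) (s : Bool)

theorem coupling_eq_zero {p : ℕ × Bool} (h₁ : p ≠ (j + 1, !s)) (h₂ : p ≠ (j - 1, !s)) :
    coupling (j, s) p = 0 := by
  obtain ⟨m, t⟩ := p
  by_cases ht : s = t
  · simp [coupling, ht]
  · obtain rfl : t = !s := by cases s <;> cases t <;> simp_all
    have hm₁ : j + 1 ≠ m := fun h => h₁ (by rw [h])
    have hm₂ : j ≠ m + 1 := fun h => h₂ (by rw [h, Nat.add_sub_cancel])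
    simp [coupling, hm₁, hm₂]

theorem coupling_succ_sq : coupling (j, s) (j + 1, !s) ^ 2 = ((j : ℝ) + 1) / 2 := by
  have : j ≠ j + 1 + 1 := by omega
  simp only [coupling, if_true, this, if_false, add_zero, Bool.eq_not_self, mul_one]
  push_cast
  exact Real.sq_sqrt (by positivity)

theorem coupling_pred_sq : coupling (j, s) (j - 1, !s) ^ 2 = (j : ℝ) / 2 := by
  cases j with
  | zero => simp [coupling]
  | succ n =>
    have : n + 1 + 1 ≠ n := by omega
    simp only [coupling, Nat.add_sub_cancel, this, if_false, if_true, zero_add,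
      Bool.eq_not_self, mul_one]
    push_cast
    exact Real.sq_sqrt (by positivity)

theorem energy_succ_sub : energy ω Ω (j + 1) (!s) - energy ω Ω j s = ω - spin s * Ω := by
  simp only [energy, spin_not]
  push_cast
  ring

theorem pred_term_eq :
    (energy ω Ω (j - 1) (!s) - energy ω Ω j s)⁻¹ * coupling (j, s) (j - 1, !s) ^ 2 =
      (-ω - spin s * Ω)⁻¹ * ((j : ℝ) / 2) := by
  rw [coupling_pred_sq]
  cases j with
  | zero => simp
  | succ n =>
    congr 2
    simp only [energy, spin_not, Nat.add_sub_cancel]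
    push_cast
    ring

end

end Rabi

open Rabi in
theorem rabi_second_order_coefficient_general
    (ω Ω : ℝ) (hω : 0 < ω) (hΩ : 0 < Ω) (hne : ω ≠ Ω)
    (σ : Bool → ℝ) (hσ : σ true = 1 ∧ σ false = -1)
    (E : ℕ → Bool → ℝ)
    (hE : ∀ (j : ℕ) (s : Bool), E j s = ω * (j + 1/2) + σ s * Ω / 2)
    (V : ℕ × Bool → ℕ × Bool → ℝ)
    (hV : ∀ p q : ℕ × Bool, V p q =
      ((if p.1 + 1 = q.1 then Real.sqrt ((q.1 : ℝ) / 2) else 0) +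
       (if p.1 = q.1 + 1 then Real.sqrt (((q.1 : ℝ) + 1) / 2) else 0)) *
      (if p.2 = q.2 then 0 else 1))
    (E2 : ℕ → Bool → ℝ)
    (hE2 : ∀ (j : ℕ) (s : Bool), E2 j s =
      -∑' p : {p : ℕ × Bool // p ≠ (j, s)},
        (E (p : ℕ × Bool).1 (p : ℕ × Bool).2 - E j s)⁻¹ * (V (j, s) p) ^ 2)
    (j : ℕ) (s : Bool) :
    E2 j s = (ω + σ s * Ω * (2 * (j : ℝ) + 1)) / (2 * (Ω ^ 2 - ω ^ 2)) := by
  obtain rfl : σ = spin := funext fun b => by cases b <;> simp [spin, hσ.1, hσ.2]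
  obtain rfl : E = energy ω Ω := funext₂ hE
  obtain rfl : V = coupling := funext₂ hV
  have hflip (k : ℕ) : (j, s) ≠ (k, !s) := by simp
  have hpair : (j + 1, !s) ≠ (j - 1, !s) := by rw [Ne, Prod.mk.injEq]; omega
  rw [hE2, tsum_ne_eq_add_of_eq_zero
      (f := fun p => (energy ω Ω p.1 p.2 - energy ω Ω j s)⁻¹ * coupling (j, s) p ^ 2)
      hpair (hflip _) (hflip _) fun p h₁ h₂ => by rw [coupling_eq_zero j s h₁ h₂]; ring,
    energy_succ_sub, coupling_succ_sq, pred_term_eq]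
  exact neg_inv_mul_add_inv_mul_eq ω Ω (spin s) j (spin_sq s)
    fun h => hne ((sq_eq_sq₀ hω.le hΩ.le).1 h)

/-- The second-order Rayleigh–Schrödinger coefficient
`E2(j,s) = −Σ_{(m,t)≠(j,s)} (E(m,t) − E(j,s))⁻¹ |V_{(j,s),(m,t)}|²` of the Rabi model
equals `(ω + sΩ(2j+1))/(2(Ω² − ω²))`.  Signs are encoded by `Bool` via `σ`. -/
theorem rabi_second_order_coefficient
    (ω Ω : ℝ) (hω : 0 < ω) (hΩ : 0 < Ω) (hne : ω ≠ Ω)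
    (hmult : ¬ ∃ n : ℤ, Ω = n * ω)
    (σ : Bool → ℝ) (hσ : σ true = 1 ∧ σ false = -1)
    (E : ℕ → Bool → ℝ)
    (hE : ∀ (j : ℕ) (s : Bool), E j s = ω * (j + 1/2) + σ s * Ω / 2)
    (V : ℕ × Bool → ℕ × Bool → ℝ)
    (hV : ∀ p q : ℕ × Bool, V p q =
      ((if p.1 + 1 = q.1 then Real.sqrt ((q.1 : ℝ) / 2) else 0) +
       (if p.1 = q.1 + 1 then Real.sqrt (((q.1 : ℝ) + 1) / 2) else 0)) *
      (if p.2 = q.2 then 0 else 1))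
    (E2 : ℕ → Bool → ℝ)
    (hE2 : ∀ (j : ℕ) (s : Bool), E2 j s =
      -∑' p : {p : ℕ × Bool // p ≠ (j, s)},
        (E (p : ℕ × Bool).1 (p : ℕ × Bool).2 - E j s)⁻¹ * (V (j, s) p) ^ 2)
    (j : ℕ) (s : Bool) :
    E2 j s = (ω + σ s * Ω * (2 * (j : ℝ) + 1)) / (2 * (Ω ^ 2 - ω ^ 2)) :=
  rabi_second_order_coefficient_general ω Ω hω hΩ hne σ hσ E hE V hV E2 hE2 j s
end

section
/- In the resonant case ω = Ω, with Φ⁰_{j,1} = (Φ_{j,1} + Φ_{j+1,−1})/√2 and Φ⁰_{j+1,−1} = (Φ_{j,1} − Φ_{j+1,−1})/√2, the matrix element ⟨Φ⁰_{j,1}, (X ⊗ 1) Φ⁰_{j+1,1}⟩ = (1/2)(√((j+1)/2) + √((j+2)/2)), which is nonzero for every j ∈ ℕ. -/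
/-!
Both rotated states are (φ_k, φ_{k+1})/√2, and X ⊗ 1 acts componentwise, so the matrix element is
half the sum of ⟪φ_j, X φ_{j+1}⟫ and ⟪φ_{j+1}, X φ_{j+2}⟫. By orthonormality only the lowering
part of the ladder relation survives in each, contributing √((j+1)/2) and √((j+2)/2).
-/

open scoped InnerProductSpace

section Ladder

variable {L : Type*} [NormedAddCommGroup L] [InnerProductSpace ℂ L]

theorem Orthonormal.inner_ladder_succ {φ : ℕ → L} (hφ : Orthonormal ℂ φ) {X : L →ₗ[ℂ] L}
    (hX : ∀ j : ℕ, X (φ j) =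
      ((Real.sqrt ((j : ℝ) / 2) : ℝ) : ℂ) • φ (j - 1) +
      ((Real.sqrt (((j : ℝ) + 1) / 2) : ℝ) : ℂ) • φ (j + 1))
    (j : ℕ) : ⟪φ j, X (φ (j + 1))⟫_ℂ = ((Real.sqrt (((j : ℝ) + 1) / 2) : ℝ) : ℂ) := by
  have hφ' := orthonormal_iff_ite.mp hφ
  rw [hX, inner_add_right, inner_smul_right, inner_smul_right, hφ', hφ',
    if_pos (Nat.add_sub_cancel j 1).symm, if_neg (by omega)]
  push_cast
  ring

theorem inner_ofReal_smul_map_ofReal_smul (T : L →ₗ[ℂ] L) (r : ℝ) (u v : L) :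
    ⟪(r : ℂ) • u, T ((r : ℂ) • v)⟫_ℂ = ((r ^ 2 : ℝ) : ℂ) * ⟪u, T v⟫_ℂ := by
  rw [map_smul, inner_smul_left, inner_smul_right, ← mul_assoc, Complex.conj_ofReal]
  push_cast
  ring

end Ladder

/-- In the resonant case `ω = Ω`, with the rotated eigenbasis
`Φ⁰_{j,1} = (Φ_{j,1} + Φ_{j+1,−1})/√2`, the matrix element of `X ⊗ 1` between
`Φ⁰_{j,1}` and `Φ⁰_{j+1,1}` equals `(1/2)(√((j+1)/2) + √((j+2)/2)) ≠ 0`. -/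
theorem rabi_resonant_coupling_plus_states
    {L : Type*} [NormedAddCommGroup L] [InnerProductSpace ℂ L]
    (φ : ℕ → L) (hortho : Orthonormal ℂ φ)
    (X : L →ₗ[ℂ] L)
    (hX : ∀ j : ℕ, X (φ j) =
      ((Real.sqrt ((j : ℝ) / 2) : ℝ) : ℂ) • φ (j - 1) +
      ((Real.sqrt (((j : ℝ) + 1) / 2) : ℝ) : ℂ) • φ (j + 1))
    (Φ : ℕ → ℝ → WithLp 2 (L × L))
    (hΦ1 : ∀ j, Φ j 1 = (WithLp.equiv 2 (L × L)).symm (φ j, 0))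
    (hΦm : ∀ j, Φ j (-1) = (WithLp.equiv 2 (L × L)).symm (0, φ j))
    (Φ0 : ℕ → ℝ → WithLp 2 (L × L))
    (hΦ0 : ∀ j, Φ0 j 1 = ((Real.sqrt 2)⁻¹ : ℂ) • (Φ j 1 + Φ (j + 1) (-1)))
    (Xone : WithLp 2 (L × L) →ₗ[ℂ] WithLp 2 (L × L))
    (hXone : ∀ ψ : WithLp 2 (L × L),
      Xone ψ = (WithLp.equiv 2 (L × L)).symm (X ψ.fst, X ψ.snd))
    (j : ℕ) :
    ⟪Φ0 j 1, Xone (Φ0 (j + 1) 1)⟫_ℂ =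
      (((1 / 2 * (Real.sqrt (((j : ℝ) + 1) / 2) + Real.sqrt (((j : ℝ) + 2) / 2))) : ℝ) : ℂ) ∧
    ⟪Φ0 j 1, Xone (Φ0 (j + 1) 1)⟫_ℂ ≠ 0 := by
  have hpair : ∀ k, Φ0 k 1 = ((Real.sqrt 2)⁻¹ : ℂ) • WithLp.toLp 2 (φ k, φ (k + 1)) := by
    intro k
    rw [hΦ0, hΦ1, hΦm, WithLp.equiv_symm_apply, ← WithLp.toLp_add,
      Prod.mk_add_mk, add_zero, zero_add]
  have hmatrix : ⟪Φ0 j 1, Xone (Φ0 (j + 1) 1)⟫_ℂ =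
      2⁻¹ * (⟪φ j, X (φ (j + 1))⟫_ℂ + ⟪φ (j + 1), X (φ (j + 1 + 1))⟫_ℂ) := by
    rw [hpair, hpair, ← Complex.ofReal_inv, inner_ofReal_smul_map_ofReal_smul, inv_pow,
      Real.sq_sqrt zero_le_two, hXone, WithLp.equiv_symm_apply, WithLp.prod_inner_apply,
      WithLp.toLp_fst, WithLp.toLp_snd, Complex.ofReal_inv, Complex.ofReal_ofNat]
  have hvalue : ⟪Φ0 j 1, Xone (Φ0 (j + 1) 1)⟫_ℂ =
      (((1 / 2 * (Real.sqrt (((j : ℝ) + 1) / 2) + Real.sqrt (((j : ℝ) + 2) / 2))) : ℝ) : ℂ) := by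
    rw [hmatrix, hortho.inner_ladder_succ hX, hortho.inner_ladder_succ hX]
    push_cast
    ring_nf
  refine ⟨hvalue, hvalue ▸ Complex.ofReal_ne_zero.mpr (ne_of_gt ?_)⟩
  have hpos : 0 < Real.sqrt (((j : ℝ) + 1) / 2) := Real.sqrt_pos.mpr (by positivity)
  positivity
end
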